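/- arXiv:2412.13651 — 2 statements merged into one kernel-verified Lean document; each statement's English description precedes it below -/
import Mathlib

section
/- Let n ≥ 2, p > 0, K ∈ K_o^n, and let f : S^{n-1} → (0,∞) be continuous. For sufficiently small δ > 0 and t ∈ (−δ, δ) define h_t(v) = (h_K(v)^p + t f(v)^p)^{1/p}. Then for every u ∈ S^{n-1} for which there is a unique v ∈ S^{n-1} satisfying ⟨ρ_K(u) u, v⟩ = h_K(v), one has lim_{t→0} (ρ_{[h_t]}(u) − ρ_K(u))/t = f(v)^p ρ_K(u) / (p h_K(v)^p). -/
open MeasureTheory Metric Set Filter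
open scoped RealInnerProductSpace ENNReal Pointwise Topology

/-- The support function of a set `K`. -/
noncomputable def supportFn {n : ℕ} (K : Set (EuclideanSpace ℝ (Fin n)))
    (v : EuclideanSpace ℝ (Fin n)) : ℝ :=
  sSup ((fun y => ⟪y, v⟫) '' K)

/-- The radial function of a set `K` at `u`. -/
noncomputable def radialFn {n : ℕ} (K : Set (EuclideanSpace ℝ (Fin n)))
    (u : EuclideanSpace ℝ (Fin n)) : ℝ :=
  sSup {l : ℝ | 0 ≤ l ∧ l • u ∈ K}

/-- The Wulff shape `[f] = ⋂_{v ∈ Sⁿ⁻¹} {x : ⟨x,v⟩ ≤ f v}`. -/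
def wulff (n : ℕ) (f : EuclideanSpace ℝ (Fin n) → ℝ) : Set (EuclideanSpace ℝ (Fin n)) :=
  ⋂ v ∈ sphere (0 : EuclideanSpace ℝ (Fin n)) 1, {x | ⟪x, v⟫ ≤ f v}

/-!
The radial function of a Wulff shape is
`ρ_{[g]}(u) = sup {l ≥ 0 | ∀ w ∈ Sⁿ⁻¹, l ⟪u, w⟫ ≤ g w}`.
Uniformly on the sphere, `h_t = h_K + t F + o(t)` with `F = h_K ^ (1 - p) f ^ p / p`, and
`r = ρ_K(u)` satisfies `r ⟪u, w⟫ ≤ h_K w` with equality exactly at `w = v`. Testing the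
constraint at `w = v` gives `ρ_{[h_t]}(u) ≤ r + t F(v) / ⟪u, v⟫ + o(t)`. Conversely
`l_t = r + t F(v) / ⟪u, v⟫ - ε |t|` satisfies every constraint for small `t`: near `v` because
`F` is continuous, away from `v` because the gap `h_K w - r ⟪u, w⟫` is positive there and hence,
by compactness, bounded below. Finally `h_K(v) = r ⟪u, v⟫` turns `F(v) / ⟪u, v⟫` into
`f(v)^p r / (p h_K(v)^p)`.
-/

open scoped NNReal

theorem abs_sub_sub_mul_le_of_lipschitzOnWith_deriv {φ φ' : ℝ → ℝ} {s : Set ℝ}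
    {C : ℝ≥0} {x y : ℝ} (hs : Convex ℝ s)
    (hφ : ∀ z ∈ s, HasDerivWithinAt φ (φ' z) s z) (hφ' : LipschitzOnWith C φ' s)
    (hx : x ∈ s) (hy : y ∈ s) :
    |φ y - φ x - φ' x * (y - x)| ≤ C * (y - x) ^ 2 := by
  have hsub : uIcc x y ⊆ s := hs.ordConnected.uIcc_subset hx hy
  have hψ : ∀ z ∈ uIcc x y,
      HasDerivWithinAt (fun z => φ z - φ' x * z) (φ' z - φ' x) (uIcc x y) z := fun z hz =>
    (((hφ z (hsub hz)).mono hsub).sub ((hasDerivWithinAt_id z _).const_mul (φ' x))).congr_deriv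
      (by ring)
  have hbound : ∀ z ∈ uIcc x y, ‖φ' z - φ' x‖ ≤ C * |y - x| := fun z hz =>
    calc ‖φ' z - φ' x‖ ≤ C * |z - x| := hφ'.dist_le_mul z (hsub hz) x hx
      _ ≤ C * |y - x| := mul_le_mul_of_nonneg_left (abs_sub_left_of_mem_uIcc hz) C.coe_nonneg
  calc |φ y - φ x - φ' x * (y - x)| = ‖(φ y - φ' x * y) - (φ x - φ' x * x)‖ := by
        rw [Real.norm_eq_abs]; ring_nf
    _ ≤ C * |y - x| * ‖y - x‖ := (convex_uIcc x y).norm_image_sub_le_of_norm_hasDerivWithin_le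
        hψ hbound left_mem_uIcc right_mem_uIcc
    _ = C * (y - x) ^ 2 := by rw [Real.norm_eq_abs, mul_assoc, abs_mul_abs_self, sq]

theorem exists_abs_rpow_sub_rpow_sub_mul_le (q : ℝ) {lo hi : ℝ} (hlo : 0 < lo) :
    ∃ C : ℝ≥0, ∀ x ∈ Icc lo hi, ∀ y ∈ Icc lo hi,
      |y ^ q - x ^ q - q * x ^ (q - 1) * (y - x)| ≤ C * (y - x) ^ 2 := by
  have hne : ∀ z ∈ Icc lo hi, z ≠ 0 := fun z hz => (hlo.trans_le hz.1).ne'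
  obtain ⟨C, hC⟩ := isCompact_Icc.exists_bound_of_continuousOn
    (f := fun z => q * ((q - 1) * z ^ (q - 1 - 1)))
    (continuousOn_const.mul (continuousOn_const.mul
      (continuousOn_id.rpow_const fun z hz => Or.inl (hne z hz))))
  refine ⟨C.toNNReal, fun x hx y hy => abs_sub_sub_mul_le_of_lipschitzOnWith_deriv
    (convex_Icc lo hi)
    (fun z hz => (Real.hasDerivAt_rpow_const (Or.inl (hne z hz))).hasDerivWithinAt) ?_ hx hy⟩
  refine (convex_Icc lo hi).lipschitzOnWith_of_nnnorm_hasDerivWithin_le (fun z hz =>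
    ((Real.hasDerivAt_rpow_const (Or.inl (hne z hz))).const_mul q).hasDerivWithinAt) fun z hz => ?_
  rw [← NNReal.coe_le_coe, coe_nnnorm, Real.coe_toNNReal']
  exact le_max_of_le_left (hC z hz)

theorem eventually_abs_rpow_add_mul_sub_le {α : Type*} [TopologicalSpace α] {S : Set α}
    (hS : IsCompact S) {a b : α → ℝ} (ha : ContinuousOn a S) (hb : ContinuousOn b S)
    (ha0 : ∀ w ∈ S, 0 < a w) (q : ℝ) {ε : ℝ} (hε : 0 < ε) :
    ∀ᶠ t in 𝓝 (0 : ℝ), ∀ w ∈ S,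
      |(a w + t * b w) ^ q - a w ^ q - t * (q * a w ^ (q - 1) * b w)| ≤ ε * |t| := by
  obtain ⟨lo, hlo, hlo_le⟩ := hS.exists_forall_le' ha ha0
  obtain ⟨hi, hhi⟩ := hS.exists_bound_of_continuousOn ha
  obtain ⟨B, hB⟩ := hS.exists_bound_of_continuousOn hb
  obtain ⟨C, hC⟩ := exists_abs_rpow_sub_rpow_sub_mul_le q (hi := hi + lo / 2) (half_pos hlo)
  have habs : Tendsto (fun t : ℝ => |t|) (𝓝 0) (𝓝 0) := continuous_abs.tendsto' 0 0 abs_zero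
  have hsmall : ∀ᶠ t in 𝓝 (0 : ℝ), |t| * B ≤ lo / 2 ∧ C * B ^ 2 * |t| ≤ ε :=
    ((habs.mul_const B).eventually (eventually_le_nhds (by simpa using half_pos hlo))).and
      ((habs.const_mul (C * B ^ 2)).eventually (eventually_le_nhds (by simpa using hε)))
  filter_upwards [hsmall] with t ⟨htB, htC⟩ w hw
  have hb_le : |b w| ≤ B := hB w hw
  have htb : |t * b w| ≤ lo / 2 := by
    rw [abs_mul]; exact (mul_le_mul_of_nonneg_left hb_le (abs_nonneg t)).trans htB
  have ha_le : a w ≤ hi := (le_abs_self _).trans (hhi w hw)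
  have hx : a w ∈ Icc (lo / 2) (hi + lo / 2) :=
    ⟨by linarith [hlo_le w hw], by linarith⟩
  have hy : a w + t * b w ∈ Icc (lo / 2) (hi + lo / 2) := by
    constructor <;> linarith [hlo_le w hw, abs_le.mp htb]
  calc |(a w + t * b w) ^ q - a w ^ q - t * (q * a w ^ (q - 1) * b w)|
      = |(a w + t * b w) ^ q - a w ^ q - q * a w ^ (q - 1) * (a w + t * b w - a w)| := by
        ring_nf
    _ ≤ C * (a w + t * b w - a w) ^ 2 := hC _ hx _ hy
    _ = C * |b w| ^ 2 * |t| * |t| := by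
        rw [add_sub_cancel_left, mul_pow, ← sq_abs t, ← sq_abs (b w)]; ring
    _ ≤ C * B ^ 2 * |t| * |t| := by gcongr
    _ ≤ ε * |t| := by gcongr

theorem eventually_abs_rpow_add_mul_rpow_sub_le {α : Type*} [TopologicalSpace α] {S : Set α}
    (hS : IsCompact S) {a b : α → ℝ} (ha : ContinuousOn a S) (hb : ContinuousOn b S)
    (ha0 : ∀ w ∈ S, 0 < a w) {p : ℝ} (hp : 0 < p) {ε : ℝ} (hε : 0 < ε) :
    ∀ᶠ t in 𝓝 (0 : ℝ), ∀ w ∈ S,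
      |(a w ^ p + t * b w ^ p) ^ (1 / p) - a w - t * (a w ^ (1 - p) * b w ^ p / p)|
        ≤ ε * |t| := by
  filter_upwards [eventually_abs_rpow_add_mul_sub_le hS (ha.rpow_const fun _ _ => Or.inr hp.le)
    (hb.rpow_const fun _ _ => Or.inr hp.le) (fun w hw => Real.rpow_pos_of_pos (ha0 w hw) p)
    (1 / p) hε] with t ht w hw
  have hroot : (a w ^ p) ^ (1 / p) = a w := by
    rw [one_div, Real.rpow_rpow_inv (ha0 w hw).le hp.ne']
  have hderiv : 1 / p * (a w ^ p) ^ (1 / p - 1) * b w ^ p = a w ^ (1 - p) * b w ^ p / p := by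
    rw [← Real.rpow_mul (ha0 w hw).le, mul_sub, mul_one_div_cancel hp.ne', mul_one]
    ring
  simpa only [hroot, hderiv] using ht w hw

theorem IsCompact.exists_pos_forall_mul_le {X : Type*} [TopologicalSpace X] [T2Space X]
    {S : Set X} (hS : IsCompact S) {A D : X → ℝ} (hA : ContinuousOn A S) (hD : ContinuousOn D S)
    (hD0 : ∀ x ∈ S, 0 ≤ D x) (hpos : ∀ x ∈ S, 0 ≤ A x → 0 < D x) :
    ∃ δ > 0, ∀ τ, 0 ≤ τ → τ ≤ δ → ∀ x ∈ S, τ * A x ≤ D x := by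
  set T := S ∩ A ⁻¹' Ici 0
  have hT : IsCompact T :=
    hS.of_isClosed_subset (hA.preimage_isClosed_of_isClosed hS.isClosed isClosed_Ici)
      inter_subset_left
  obtain ⟨d, hd, hdD⟩ := hT.exists_forall_le' (hD.mono inter_subset_left)
    fun x hx => hpos x hx.1 hx.2
  obtain ⟨M, hM⟩ := hT.exists_bound_of_continuousOn (hA.mono inter_subset_left)
  refine ⟨d / (|M| + 1), by positivity, fun τ hτ hτδ x hx => ?_⟩
  rcases le_or_gt 0 (A x) with hAx | hAx
  · have hAM : A x ≤ |M| + 1 := by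
      linarith [le_abs_self M, (le_abs_self (A x)).trans (hM x ⟨hx, hAx⟩)]
    calc τ * A x ≤ d / (|M| + 1) * (|M| + 1) := mul_le_mul hτδ hAM hAx (by positivity)
      _ = d := div_mul_cancel₀ d (by positivity)
      _ ≤ D x := hdD x ⟨hx, hAx⟩
  · exact (mul_nonpos_of_nonneg_of_nonpos hτ hAx.le).trans (hD0 x hx)

section ConvexBody

variable {n : ℕ} {K : Set (EuclideanSpace ℝ (Fin n))}

theorem exists_pos_smul_mem_of_zero_mem_interior
    (hK : (0 : EuclideanSpace ℝ (Fin n)) ∈ interior K) (x : EuclideanSpace ℝ (Fin n)) :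
    ∃ ε : ℝ, 0 < ε ∧ ε • x ∈ K := by
  have hcont : Tendsto (fun ε : ℝ => ε • x) (𝓝[>] 0) (𝓝 0) :=
    (Continuous.tendsto' (f := fun ε : ℝ => ε • x) (by fun_prop) 0 0
      (zero_smul ℝ x)).mono_left nhdsWithin_le_nhds
  exact (eventually_mem_nhdsWithin.and (hcont (mem_interior_iff_mem_nhds.mp hK))).exists

theorem le_supportFn (hK : IsCompact K) {y : EuclideanSpace ℝ (Fin n)} (hy : y ∈ K)
    (v : EuclideanSpace ℝ (Fin n)) : ⟪y, v⟫ ≤ supportFn K v :=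
  le_csSup (hK.bddAbove_image (continuous_id.inner continuous_const).continuousOn) ⟨y, hy, rfl⟩

theorem continuous_supportFn (hK : IsCompact K) : Continuous (supportFn K) :=
  hK.continuous_sSup (f := fun v y => ⟪y, v⟫) (continuous_snd.inner continuous_fst)

theorem supportFn_pos (hK : IsCompact K) (hK0 : (0 : EuclideanSpace ℝ (Fin n)) ∈ interior K)
    {v : EuclideanSpace ℝ (Fin n)} (hv : v ≠ 0) : 0 < supportFn K v := by
  obtain ⟨ε, hε, hεv⟩ := exists_pos_smul_mem_of_zero_mem_interior hK0 v
  calc 0 < ε * ‖v‖ ^ 2 := by positivity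
    _ = ⟪ε • v, v⟫ := by rw [real_inner_smul_left, real_inner_self_eq_norm_sq]
    _ ≤ supportFn K v := le_supportFn hK hεv v

theorem bddAbove_setOf_smul_mem (hK : Bornology.IsBounded K) {u : EuclideanSpace ℝ (Fin n)}
    (hu : u ≠ 0) : BddAbove {l : ℝ | 0 ≤ l ∧ l • u ∈ K} := by
  obtain ⟨R, hR⟩ := hK.exists_norm_le
  refine ⟨R / ‖u‖, fun l ⟨hl, hlu⟩ => ?_⟩
  rw [le_div_iff₀ (norm_pos_iff.mpr hu)]
  simpa [norm_smul, abs_of_nonneg hl] using hR _ hlu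

theorem radialFn_smul_mem (hK : IsCompact K) (hK0 : (0 : EuclideanSpace ℝ (Fin n)) ∈ K)
    {u : EuclideanSpace ℝ (Fin n)} (hu : u ≠ 0) : radialFn K u • u ∈ K := by
  have hclosed : IsClosed {l : ℝ | 0 ≤ l ∧ l • u ∈ K} :=
    isClosed_Ici.inter (hK.isClosed.preimage (continuous_id.smul continuous_const))
  exact (hclosed.csSup_mem ⟨0, le_rfl, by rwa [zero_smul]⟩
    (bddAbove_setOf_smul_mem hK.isBounded hu)).2

theorem radialFn_pos (hK : IsCompact K) (hK0 : (0 : EuclideanSpace ℝ (Fin n)) ∈ interior K)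
    {u : EuclideanSpace ℝ (Fin n)} (hu : u ≠ 0) : 0 < radialFn K u := by
  obtain ⟨ε, hε, hεu⟩ := exists_pos_smul_mem_of_zero_mem_interior hK0 u
  exact hε.trans_le
    (le_csSup (bddAbove_setOf_smul_mem hK.isBounded hu) (show ε ∈ _ from ⟨hε.le, hεu⟩))

end ConvexBody

section Wulff

variable {n : ℕ} {u v : EuclideanSpace ℝ (Fin n)}

local notation "𝕊" => sphere (0 : EuclideanSpace ℝ (Fin n)) 1

theorem mem_wulff {g : EuclideanSpace ℝ (Fin n) → ℝ} {x : EuclideanSpace ℝ (Fin n)} :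
    x ∈ wulff n g ↔ ∀ w ∈ 𝕊, ⟪x, w⟫ ≤ g w := by
  simp [wulff]

theorem radialFn_wulff_mem_Icc {g : EuclideanSpace ℝ (Fin n) → ℝ}
    (hv : v ∈ 𝕊) (huv : 0 < ⟪u, v⟫) {l : ℝ} (hl : 0 ≤ l)
    (hlu : l • u ∈ wulff n g) : radialFn (wulff n g) u ∈ Icc l (g v / ⟪u, v⟫) := by
  have hbound : ∀ l' ∈ {l : ℝ | 0 ≤ l ∧ l • u ∈ wulff n g}, l' ≤ g v / ⟪u, v⟫ :=
    fun l' hl' => by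
      rw [le_div_iff₀ huv, ← real_inner_smul_left]
      exact mem_wulff.mp hl'.2 v hv
  exact ⟨le_csSup ⟨_, hbound⟩ ⟨hl, hlu⟩, csSup_le ⟨l, hl, hlu⟩ hbound⟩

variable {r : ℝ} {h F : EuclideanSpace ℝ (Fin n) → ℝ}
  {g : ℝ → EuclideanSpace ℝ (Fin n) → ℝ}

theorem eventually_smul_mem_wulff (huv : 0 < ⟪u, v⟫) (hr : 0 < r)
    (hh : ContinuousOn h 𝕊) (hF : ContinuousOn F 𝕊)
    (hle : ∀ w ∈ 𝕊, r * ⟪u, w⟫ ≤ h w)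
    (huniq : ∀ w ∈ 𝕊, r * ⟪u, w⟫ = h w → w = v)
    (hg : ∀ ε > 0, ∀ᶠ t in 𝓝 (0 : ℝ), ∀ w ∈ 𝕊,
      |g t w - h w - t * F w| ≤ ε * |t|)
    {e : ℝ} (he : 0 < e) :
    ∀ᶠ t in 𝓝 (0 : ℝ), 0 ≤ r + t * (F v / ⟪u, v⟫) - e * |t| ∧
      (r + t * (F v / ⟪u, v⟫) - e * |t|) • u ∈ wulff n (g t) := by
  set c := ⟪u, v⟫
  set L := F v / c
  -- The constraint at `w` follows from `|t| * A w ≤ D w`, which is automatic where `A w < 0`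
  -- (in particular near `v`); elsewhere uniqueness of `v` makes the gap `D w` positive.
  set A := fun w => |L * ⟪u, w⟫ - F w| + e * c / 2 - e * ⟪u, w⟫
  set D := fun w => h w - r * ⟪u, w⟫
  have hAv : A v < 0 := by
    have : L * c = F v := div_mul_cancel₀ _ huv.ne'
    show |L * c - F v| + e * c / 2 - e * c < 0
    rw [this, sub_self, abs_zero]
    linarith [mul_pos he huv]
  have hpos : ∀ w ∈ 𝕊, 0 ≤ A w → 0 < D w :=
    fun w hw hAw => sub_pos.2 <| (hle w hw).lt_of_ne fun heq => hAv.not_ge (huniq w hw heq ▸ hAw)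
  have hA : ContinuousOn A 𝕊 := by fun_prop
  have hD : ContinuousOn D 𝕊 := by fun_prop
  obtain ⟨δ, hδ, hδA⟩ := (isCompact_sphere _ _).exists_pos_forall_mul_le hA hD
    (fun w hw => sub_nonneg.2 (hle w hw)) hpos
  have hsmall : ∀ᶠ t in 𝓝 (0 : ℝ), |t| ≤ δ :=
    (continuous_abs.tendsto' 0 0 abs_zero).eventually (eventually_le_nhds hδ)
  have hnonneg : ∀ᶠ t in 𝓝 (0 : ℝ), 0 ≤ r + t * L - e * |t| :=
    (Continuous.tendsto' (f := fun t : ℝ => r + t * L - e * |t|) (by fun_prop) 0 r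
      (by simp)).eventually (eventually_ge_nhds hr)
  filter_upwards [hsmall, hnonneg, hg (e * c / 2) (by positivity)] with t htδ ht0 hgt
  refine ⟨ht0, mem_wulff.2 fun w hw => ?_⟩
  have hAw : |t| * A w ≤ D w := hδA |t| (abs_nonneg t) htδ w hw
  have hgw := (abs_le.mp (hgt w hw)).1
  have hlin : t * (L * ⟪u, w⟫ - F w) ≤ |t| * |L * ⟪u, w⟫ - F w| := by
    rw [← abs_mul]; exact le_abs_self _
  simp only [A, D] at hAw
  rw [real_inner_smul_left]
  linarith

theorem tendsto_slope_radialFn_wulff (hv : v ∈ 𝕊)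
    (huv : 0 < ⟪u, v⟫) (hr : 0 < r)
    (hh : ContinuousOn h 𝕊) (hF : ContinuousOn F 𝕊)
    (hle : ∀ w ∈ 𝕊, r * ⟪u, w⟫ ≤ h w)
    (heq : r * ⟪u, v⟫ = h v)
    (huniq : ∀ w ∈ 𝕊, r * ⟪u, w⟫ = h w → w = v)
    (hg : ∀ ε > 0, ∀ᶠ t in 𝓝 (0 : ℝ), ∀ w ∈ 𝕊,
      |g t w - h w - t * F w| ≤ ε * |t|) :
    Tendsto (fun t => (radialFn (wulff n (g t)) u - r) / t) (𝓝[≠] 0)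
      (𝓝 (F v / ⟪u, v⟫)) := by
  set L := F v / ⟪u, v⟫
  have hL : ∀ t : ℝ, t * L * ⟪u, v⟫ = t * F v := fun t => by
    rw [mul_assoc, div_mul_cancel₀ _ huv.ne']
  have hlittle : (fun t => radialFn (wulff n (g t)) u - r - t * L) =o[𝓝 0] fun t => t := by
    refine Asymptotics.isLittleO_iff.2 fun e he => ?_
    filter_upwards [eventually_smul_mem_wulff huv hr hh hF hle huniq hg he,
      hg (e * ⟪u, v⟫) (by positivity)] with t ⟨hl0, hlu⟩ hgt
    obtain ⟨hlow, hup⟩ := radialFn_wulff_mem_Icc hv huv hl0 hlu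
    have hgv : g t v / ⟪u, v⟫ ≤ r + t * L + e * |t| := by
      rw [div_le_iff₀ huv]
      linarith [(abs_le.mp (hgt v hv)).2, hL t]
    rw [Real.norm_eq_abs, Real.norm_eq_abs, abs_le]
    constructor <;> linarith
  refine ((hlittle.tendsto_div_nhds_zero.mono_left nhdsWithin_le_nhds).add_const L).congr' ?_
    |>.trans (by rw [zero_add])
  filter_upwards [self_mem_nhdsWithin] with t (ht : t ≠ 0)
  field_simp
  ring

end Wulff

theorem radialFn_wulff_derivative_general (n : ℕ) (p : ℝ) (hp : 0 < p)
    (K : Set (EuclideanSpace ℝ (Fin n)))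
    (hK : IsCompact K) (hKo : (0 : EuclideanSpace ℝ (Fin n)) ∈ interior K)
    (f : EuclideanSpace ℝ (Fin n) → ℝ)
    (hf : ContinuousOn f (sphere (0 : EuclideanSpace ℝ (Fin n)) 1))
    (u : EuclideanSpace ℝ (Fin n))
    (v : EuclideanSpace ℝ (Fin n)) (hv : v ∈ sphere (0 : EuclideanSpace ℝ (Fin n)) 1)
    (hvK : ⟪radialFn K u • u, v⟫ = supportFn K v)
    (hvuniq : ∀ w ∈ sphere (0 : EuclideanSpace ℝ (Fin n)) 1,
      ⟪radialFn K u • u, w⟫ = supportFn K w → w = v) :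
    Tendsto
      (fun t : ℝ =>
        (radialFn (wulff n (fun w => (supportFn K w ^ p + t * f w ^ p) ^ (1 / p))) u
          - radialFn K u) / t)
      (𝓝[≠] 0)
      (𝓝 (f v ^ p * radialFn K u / (p * supportFn K v ^ p))) := by
  set h := supportFn K
  set r := radialFn K u
  have hh : Continuous h := continuous_supportFn hK
  have hh_pos : ∀ w ∈ sphere (0 : EuclideanSpace ℝ (Fin n)) 1, 0 < h w := fun w hw =>
    supportFn_pos hK hKo (ne_zero_of_mem_sphere one_ne_zero ⟨w, hw⟩)
  have hu : u ≠ 0 := by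
    rintro rfl
    simp only [smul_zero, inner_zero_left] at hvK
    exact (hh_pos v hv).ne hvK
  have hr : 0 < r := radialFn_pos hK hKo hu
  have hle : ∀ w ∈ sphere (0 : EuclideanSpace ℝ (Fin n)) 1, r * ⟪u, w⟫ ≤ h w := by
    intro w _
    simpa only [real_inner_smul_left] using
      le_supportFn hK (radialFn_smul_mem hK (interior_subset hKo) hu) w
  simp only [real_inner_smul_left] at hvK hvuniq
  have huv : 0 < ⟪u, v⟫ := pos_of_mul_pos_right (hvK ▸ hh_pos v hv) hr.le
  have hF : ContinuousOn (fun w => h w ^ (1 - p) * f w ^ p / p) (sphere 0 1) :=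
    ((hh.continuousOn.rpow_const fun w hw => Or.inl (hh_pos w hw).ne').mul
      (hf.rpow_const fun _ _ => Or.inr hp.le)).div_const p
  convert tendsto_slope_radialFn_wulff hv huv hr hh.continuousOn hF hle hvK hvuniq fun ε hε =>
    eventually_abs_rpow_add_mul_rpow_sub_le (isCompact_sphere 0 1) hh.continuousOn hf hh_pos hp hε
    using 2
  rw [show ⟪u, v⟫ = h v / r by rw [← hvK]; field_simp, Real.rpow_sub (hh_pos v hv),
    Real.rpow_one]
  field_simp [(hh_pos v hv).ne']

theorem radialFn_wulff_derivative (n : ℕ) (hn : 2 ≤ n) (p : ℝ) (hp : 0 < p)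
    (K : Set (EuclideanSpace ℝ (Fin n)))
    (hK : IsCompact K) (hKconv : Convex ℝ K) (hKo : (0 : EuclideanSpace ℝ (Fin n)) ∈ interior K)
    (f : EuclideanSpace ℝ (Fin n) → ℝ)
    (hf : ContinuousOn f (sphere (0 : EuclideanSpace ℝ (Fin n)) 1))
    (hfpos : ∀ v ∈ sphere (0 : EuclideanSpace ℝ (Fin n)) 1, 0 < f v)
    (u : EuclideanSpace ℝ (Fin n)) (hu : u ∈ sphere (0 : EuclideanSpace ℝ (Fin n)) 1)
    (v : EuclideanSpace ℝ (Fin n)) (hv : v ∈ sphere (0 : EuclideanSpace ℝ (Fin n)) 1)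
    (hvK : ⟪radialFn K u • u, v⟫ = supportFn K v)
    (hvuniq : ∀ w ∈ sphere (0 : EuclideanSpace ℝ (Fin n)) 1,
      ⟪radialFn K u • u, w⟫ = supportFn K w → w = v) :
    Tendsto
      (fun t : ℝ =>
        (radialFn (wulff n (fun w => (supportFn K w ^ p + t * f w ^ p) ^ (1 / p))) u
          - radialFn K u) / t)
      (𝓝[≠] 0)
      (𝓝 (f v ^ p * radialFn K u / (p * supportFn K v ^ p))) :=
  radialFn_wulff_derivative_general n p hp K hK hKo f hf u v hv hvK hvuniq
end

section
/- Let n ≥ 2, p, q > 1, K ∈ K_o^n, f : S^{n-1} → (0,∞) continuous, and set h_t(v) = (h_K(v)^p + t f(v)^p)^{1/p} for small t. Then there exist δ > 0 and C > 0 such that for all u ∈ S^{n-1} and all t ∈ (−δ, δ), | ∫_{ρ_K(u)}^{ρ_{[h_t]}(u)} e^{−r²/2} r^{q−1} dr | ≤ C |t|. -/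
open MeasureTheory Metric Set Filter
open scoped RealInnerProductSpace ENNReal Pointwise Topology

lemma rpow_tangent {x y α : ℝ} (hy : 0 < y) (hx : 0 ≤ x) (h0 : 0 ≤ α) (h1 : α ≤ 1) :
    x ^ α ≤ y ^ α + α * y ^ (α - 1) * (x - y) := by
  have hs : (-1 : ℝ) ≤ x / y - 1 := by
    have : 0 ≤ x / y := div_nonneg hx hy.le
    linarith
  have key := rpow_one_add_le_one_add_mul_self hs h0 h1
  have h2 : (x / y) ^ α ≤ 1 + α * (x / y - 1) := by
    have hxy : 1 + (x / y - 1) = x / y := by ring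
    rwa [hxy] at key
  have h3 : (x / y) ^ α = x ^ α / y ^ α := Real.div_rpow hx hy.le α
  have hyα : 0 < y ^ α := Real.rpow_pos_of_pos hy α
  have h4 : y ^ (α - 1) = y ^ α / y := by
    rw [Real.rpow_sub hy, Real.rpow_one]
  rw [h3, div_le_iff₀ hyα] at h2
  have h5 : (1 + α * (x / y - 1)) * y ^ α = y ^ α + α * (y ^ α / y) * (x - y) := by
    field_simp
  rw [h5] at h2
  rw [h4]
  linarith

lemma rpow_lip {c0 x y α : ℝ} (hc0 : 0 < c0) (hx : c0 ≤ x) (hy : c0 ≤ y)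
    (h0 : 0 < α) (h1 : α ≤ 1) :
    |x ^ α - y ^ α| ≤ α * c0 ^ (α - 1) * |x - y| := by
  have key : ∀ a b : ℝ, c0 ≤ a → c0 ≤ b → b ≤ a →
      a ^ α - b ^ α ≤ α * c0 ^ (α - 1) * (a - b) := by
    intro a b ha hb hba
    have hbpos : 0 < b := hc0.trans_le hb
    have htan := rpow_tangent (x := a) hbpos (hc0.le.trans ha) h0.le h1
    have hmono : b ^ (α - 1) ≤ c0 ^ (α - 1) :=
      Real.rpow_le_rpow_of_nonpos hc0 hb (by linarith)
    have hprod : α * b ^ (α - 1) * (a - b) ≤ α * c0 ^ (α - 1) * (a - b) :=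
      mul_le_mul_of_nonneg_right (mul_le_mul_of_nonneg_left hmono h0.le)
        (sub_nonneg.mpr hba)
    linarith
  rcases le_total y x with h | h
  · rw [abs_of_nonneg (by nlinarith [Real.rpow_le_rpow (hc0.le.trans hy) h h0.le] : (0:ℝ) ≤ x ^ α - y ^ α),
      abs_of_nonneg (by linarith)]
    exact key x y hx hy h
  · rw [abs_of_nonpos (by nlinarith [Real.rpow_le_rpow (hc0.le.trans hx) h h0.le] : x ^ α - y ^ α ≤ 0),
      abs_of_nonpos (by linarith)]
    have := key y x hy hx h
    linarith

lemma mem_of_inner_le {n : ℕ} {K : Set (EuclideanSpace ℝ (Fin n))} (hKc : IsClosed K)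
    (hKconv : Convex ℝ K) (hne : K.Nonempty) {x : EuclideanSpace ℝ (Fin n)}
    (h : ∀ v ∈ sphere (0 : EuclideanSpace ℝ (Fin n)) 1, ⟪x, v⟫ ≤ supportFn K v) : x ∈ K := by
  by_contra hx
  obtain ⟨φ, u, hu, hux⟩ := geometric_hahn_banach_closed_point hKconv hKc hx
  set z := (InnerProductSpace.toDual ℝ (EuclideanSpace ℝ (Fin n))).symm φ with hzdef
  have hzx : ∀ y, ⟪z, y⟫ = φ y := fun y => InnerProductSpace.toDual_symm_apply
  have hzne : z ≠ 0 := by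
    intro h0
    obtain ⟨y, hy⟩ := hne
    have h1 : φ y = 0 := by rw [← hzx, h0, inner_zero_left]
    have h2 : φ x = 0 := by rw [← hzx, h0, inner_zero_left]
    linarith [hu y hy]
  have hznorm : 0 < ‖z‖ := norm_pos_iff.mpr hzne
  set v : EuclideanSpace ℝ (Fin n) := ‖z‖⁻¹ • z with hvdef
  have hv : v ∈ sphere (0 : EuclideanSpace ℝ (Fin n)) 1 := by
    rw [mem_sphere_zero_iff_norm, hvdef, norm_smul, norm_inv, norm_norm,
      inv_mul_cancel₀ hznorm.ne']
  have hiv : ∀ y : EuclideanSpace ℝ (Fin n), ⟪y, v⟫ = ‖z‖⁻¹ * φ y := by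
    intro y
    rw [hvdef, real_inner_smul_right, real_inner_comm, hzx]
  have hsupp : supportFn K v ≤ ‖z‖⁻¹ * u := by
    apply csSup_le (hne.image _)
    rintro b ⟨y, hy, rfl⟩
    show ⟪y, v⟫ ≤ ‖z‖⁻¹ * u
    rw [hiv]
    exact mul_le_mul_of_nonneg_left (hu y hy).le (inv_nonneg.mpr hznorm.le)
  have hxv : ⟪x, v⟫ ≤ supportFn K v := h v hv
  rw [hiv] at hxv
  have : ‖z‖⁻¹ * u < ‖z‖⁻¹ * φ x :=
    mul_lt_mul_of_pos_left hux (inv_pos.mpr hznorm)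
  linarith

set_option maxHeartbeats 1000000 in
theorem G_difference_lipschitz (n : ℕ) (hn : 2 ≤ n) (p q : ℝ) (hp : 1 < p) (hq : 1 < q)
    (K : Set (EuclideanSpace ℝ (Fin n)))
    (hK : IsCompact K) (hKconv : Convex ℝ K) (hKo : (0 : EuclideanSpace ℝ (Fin n)) ∈ interior K)
    (f : EuclideanSpace ℝ (Fin n) → ℝ)
    (hf : ContinuousOn f (sphere (0 : EuclideanSpace ℝ (Fin n)) 1))
    (hfpos : ∀ v ∈ sphere (0 : EuclideanSpace ℝ (Fin n)) 1, 0 < f v) :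
    ∃ δ > (0 : ℝ), ∃ C > (0 : ℝ),
      ∀ u ∈ sphere (0 : EuclideanSpace ℝ (Fin n)) 1, ∀ t ∈ Set.Ioo (-δ) δ,
        |∫ r in (radialFn K u)..(radialFn
            (wulff n (fun v => (supportFn K v ^ p + t * f v ^ p) ^ (1 / p))) u),
          Real.exp (-r ^ 2 / 2) * r ^ (q - 1)| ≤ C * |t| := by
  have hp0 : 0 < p := by linarith
  have hpne : p ≠ 0 := hp0.ne'
  -- inner radius
  obtain ⟨r1, hr1pos, hball⟩ := Metric.mem_nhds_iff.mp (mem_interior_iff_mem_nhds.mp hKo)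
  set r0 : ℝ := r1 / 2 with hr0def
  have hr0pos : 0 < r0 := by positivity
  have hr0K : ∀ y : EuclideanSpace ℝ (Fin n), ‖y‖ ≤ r0 → y ∈ K := by
    intro y hy
    exact hball (mem_ball_zero_iff.mpr (by rw [hr0def] at hy; linarith))
  -- outer radius
  obtain ⟨R1, hR1⟩ := hK.isBounded.subset_closedBall 0
  set R0 : ℝ := max R1 r0 with hR0def
  have hR0r0 : r0 ≤ R0 := le_max_right _ _
  have hR0pos : 0 < R0 := lt_of_lt_of_le hr0pos hR0r0
  have hKR : ∀ y ∈ K, ‖y‖ ≤ R0 := by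
    intro y hy
    exact le_trans (mem_closedBall_zero_iff.mp (hR1 hy)) (le_max_left _ _)
  have h0K : (0 : EuclideanSpace ℝ (Fin n)) ∈ K := hr0K 0 (by simp [hr0pos.le])
  have hKne : K.Nonempty := ⟨0, h0K⟩
  -- support function bounds
  have hbdd : ∀ v ∈ sphere (0 : EuclideanSpace ℝ (Fin n)) 1,
      BddAbove ((fun y => ⟪y, v⟫) '' K) := by
    intro v hv
    refine ⟨R0, ?_⟩
    rintro b ⟨y, hy, rfl⟩
    calc ⟪y, v⟫ ≤ ‖y‖ * ‖v‖ := real_inner_le_norm _ _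
    _ ≤ R0 := by rw [mem_sphere_zero_iff_norm.mp hv, mul_one]; exact hKR y hy
  have hsupub : ∀ v ∈ sphere (0 : EuclideanSpace ℝ (Fin n)) 1, supportFn K v ≤ R0 := by
    intro v hv
    apply csSup_le (hKne.image _)
    rintro b ⟨y, hy, rfl⟩
    calc ⟪y, v⟫ ≤ ‖y‖ * ‖v‖ := real_inner_le_norm _ _
    _ ≤ R0 := by rw [mem_sphere_zero_iff_norm.mp hv, mul_one]; exact hKR y hy
  have hsuplb : ∀ v ∈ sphere (0 : EuclideanSpace ℝ (Fin n)) 1, r0 ≤ supportFn K v := by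
    intro v hv
    have hvn : ‖v‖ = 1 := mem_sphere_zero_iff_norm.mp hv
    apply le_csSup (hbdd v hv)
    refine ⟨r0 • v, hr0K _ (by rw [norm_smul, hvn, mul_one, Real.norm_eq_abs,
      abs_of_pos hr0pos]), ?_⟩
    show ⟪r0 • v, v⟫ = r0
    rw [real_inner_smul_left, real_inner_self_eq_norm_mul_norm, hvn]
    ring
  -- bound for f
  have hsphne : (sphere (0 : EuclideanSpace ℝ (Fin n)) 1).Nonempty := by
    refine ⟨EuclideanSpace.single ⟨0, by omega⟩ (1 : ℝ), ?_⟩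
    rw [mem_sphere_zero_iff_norm, EuclideanSpace.norm_single]
    norm_num
  obtain ⟨v0, hv0, hM⟩ := (isCompact_sphere (0 : EuclideanSpace ℝ (Fin n)) 1).exists_isMaxOn
    hsphne hf
  set M : ℝ := f v0 with hMdef
  have hMpos : 0 < M := hfpos v0 hv0
  have hMp : 0 < M ^ p := Real.rpow_pos_of_pos hMpos p
  -- constants
  have hα0 : 0 < 1 / p := by positivity
  have hα1 : 1 / p ≤ 1 := by rw [div_le_one hp0]; linarith
  set c0 : ℝ := r0 ^ p / 2 with hc0def
  have hr0p : 0 < r0 ^ p := Real.rpow_pos_of_pos hr0pos p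
  have hc0 : 0 < c0 := by rw [hc0def]; linarith
  set L : ℝ := (1 / p) * c0 ^ (1 / p - 1) with hLdef
  have hL : 0 < L := mul_pos hα0 (Real.rpow_pos_of_pos hc0 _)
  set c2 : ℝ := L * M ^ p with hc2def
  have hc2 : 0 < c2 := mul_pos hL hMp
  set Mi : ℝ := (2 * R0) ^ (q - 1) with hMidef
  have hMi : 0 < Mi := Real.rpow_pos_of_pos (by linarith) _
  set δ : ℝ := min (r0 ^ p / (2 * M ^ p)) (r0 / (2 * c2)) with hδdef
  have hδ : 0 < δ := lt_min (by positivity) (by positivity)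
  set C : ℝ := Mi * (c2 * R0 / r0) with hCdef
  have hC : 0 < C := by positivity
  refine ⟨δ, hδ, C, hC, ?_⟩
  intro u hu t ht
  have hun : ‖u‖ = 1 := mem_sphere_zero_iff_norm.mp hu
  have htabs : |t| < δ := abs_lt.mpr ⟨ht.1, ht.2⟩
  have ht1 : |t| * M ^ p ≤ r0 ^ p / 2 := by
    have h1 : |t| ≤ r0 ^ p / (2 * M ^ p) := le_trans htabs.le (min_le_left _ _)
    rw [le_div_iff₀ (by positivity)] at h1
    nlinarith
  have ht2 : c2 * |t| ≤ r0 / 2 := by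
    have h1 : |t| ≤ r0 / (2 * c2) := le_trans htabs.le (min_le_right _ _)
    rw [le_div_iff₀ (by positivity)] at h1
    nlinarith
  set ε : ℝ := c2 * |t| / r0 with hεdef
  have hε0 : 0 ≤ ε := by positivity
  have hεhalf : ε ≤ 1 / 2 := by
    rw [hεdef, div_le_iff₀ hr0pos]
    nlinarith
  set g : EuclideanSpace ℝ (Fin n) → ℝ :=
    fun v => (supportFn K v ^ p + t * f v ^ p) ^ (1 / p) with hgdef
  set W := wulff n g with hWdef
  -- key pointwise bounds for g
  have key : ∀ v ∈ sphere (0 : EuclideanSpace ℝ (Fin n)) 1,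
      (1 - ε) * supportFn K v ≤ g v ∧ g v ≤ (1 + ε) * supportFn K v := by
    intro v hv
    set a : ℝ := supportFn K v with hadef
    have ha1 : r0 ≤ a := hsuplb v hv
    have ha2 : a ≤ R0 := hsupub v hv
    have hapos : 0 < a := lt_of_lt_of_le hr0pos ha1
    have hap : r0 ^ p ≤ a ^ p := Real.rpow_le_rpow hr0pos.le ha1 hp0.le
    have hfv : 0 < f v := hfpos v hv
    have hfp : f v ^ p ≤ M ^ p := Real.rpow_le_rpow hfv.le (hM hv) hp0.le
    have hfpn : 0 < f v ^ p := Real.rpow_pos_of_pos hfv p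
    have habs : |t * f v ^ p| ≤ |t| * M ^ p := by
      rw [abs_mul, abs_of_pos hfpn]
      exact mul_le_mul_of_nonneg_left hfp (abs_nonneg t)
    have habs2 := abs_le.mp (habs.trans ht1)
    have hlow : c0 ≤ a ^ p + t * f v ^ p := by
      rw [hc0def]; linarith
    have hapc0 : c0 ≤ a ^ p := by rw [hc0def]; linarith
    have hlip := rpow_lip hc0 hlow hapc0 hα0 hα1
    have haa : (a ^ p) ^ (1 / p) = a := by
      rw [← Real.rpow_mul hapos.le, mul_one_div, div_self hpne, Real.rpow_one]
    have hdiff : |g v - a| ≤ c2 * |t| := by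
      have hg1 : g v = (a ^ p + t * f v ^ p) ^ (1 / p) := rfl
      calc |g v - a| = |(a ^ p + t * f v ^ p) ^ (1 / p) - (a ^ p) ^ (1 / p)| := by
            rw [hg1, haa]
      _ ≤ 1 / p * c0 ^ (1 / p - 1) * |a ^ p + t * f v ^ p - a ^ p| := hlip
      _ = L * |t * f v ^ p| := by rw [hLdef]; ring_nf
      _ ≤ L * (|t| * M ^ p) := mul_le_mul_of_nonneg_left habs hL.le
      _ = c2 * |t| := by rw [hc2def]; ring
    have hεa : c2 * |t| ≤ ε * a := by
      rw [hεdef, div_mul_eq_mul_div, le_div_iff₀ hr0pos]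
      exact mul_le_mul_of_nonneg_left ha1 (by positivity)
    have hd2 := abs_le.mp hdiff
    constructor <;> linarith
  have hgpos : ∀ v ∈ sphere (0 : EuclideanSpace ℝ (Fin n)) 1, 0 < g v := by
    intro v hv
    have h1 := (key v hv).1
    have h2 := hsuplb v hv
    nlinarith
  -- radial function of K at u
  set SK := {l : ℝ | 0 ≤ l ∧ l • u ∈ K} with hSKdef
  have hSKne : SK.Nonempty := ⟨0, le_rfl, by rw [zero_smul]; exact h0K⟩
  have hSKub : ∀ l ∈ SK, l ≤ R0 := by
    rintro l ⟨hl0, hlK⟩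
    have := hKR _ hlK
    rwa [norm_smul, hun, mul_one, Real.norm_eq_abs, abs_of_nonneg hl0] at this
  have hSKbdd : BddAbove SK := ⟨R0, hSKub⟩
  have hSKclosed : IsClosed SK := by
    have : SK = Set.Ici (0:ℝ) ∩ (fun l : ℝ => l • u) ⁻¹' K := rfl
    rw [this]
    exact isClosed_Ici.inter (hK.isClosed.preimage (continuous_id.smul continuous_const))
  have hρKrfl : radialFn K u = sSup SK := rfl
  have hρKmem : sSup SK ∈ SK := hSKclosed.csSup_mem hSKne hSKbdd
  set ρK : ℝ := sSup SK with hρKdef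
  have hρKlb : r0 ≤ ρK := le_csSup hSKbdd ⟨hr0pos.le,
    hr0K _ (by rw [norm_smul, hun, mul_one, Real.norm_eq_abs, abs_of_pos hr0pos])⟩
  have hρKub : ρK ≤ R0 := csSup_le hSKne hSKub
  have hρK0 : 0 ≤ ρK := hρKmem.1
  have hρKK : ρK • u ∈ K := hρKmem.2
  have hρKinner : ∀ v ∈ sphere (0 : EuclideanSpace ℝ (Fin n)) 1,
      ⟪ρK • u, v⟫ ≤ supportFn K v := fun v hv => le_csSup (hbdd v hv) ⟨ρK • u, hρKK, rfl⟩
  -- radial function of W at u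
  have hWmem : ∀ x ∈ W, ∀ v ∈ sphere (0 : EuclideanSpace ℝ (Fin n)) 1, ⟪x, v⟫ ≤ g v := by
    intro x hx v hv
    exact Set.mem_iInter₂.mp hx v hv
  have h1ε : 0 < 1 + ε := by linarith
  set SW := {l : ℝ | 0 ≤ l ∧ l • u ∈ W} with hSWdef
  have hupper : ∀ l ∈ SW, l ≤ (1 + ε) * ρK := by
    rintro l ⟨hl0, hlW⟩
    have hxK : (1 + ε)⁻¹ • (l • u) ∈ K := by
      apply mem_of_inner_le hK.isClosed hKconv hKne
      intro v hv
      rw [real_inner_smul_left]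
      have h1 := (hWmem _ hlW v hv).trans (key v hv).2
      calc (1 + ε)⁻¹ * ⟪l • u, v⟫ ≤ (1 + ε)⁻¹ * ((1 + ε) * supportFn K v) :=
            mul_le_mul_of_nonneg_left h1 (inv_nonneg.2 h1ε.le)
      _ = supportFn K v := by field_simp
    have hmem : (1 + ε)⁻¹ * l ∈ SK := ⟨by positivity, by rw [mul_smul]; exact hxK⟩
    have hle := le_csSup hSKbdd hmem
    calc l = (1 + ε) * ((1 + ε)⁻¹ * l) := by field_simp
    _ ≤ (1 + ε) * ρK := mul_le_mul_of_nonneg_left hle h1ε.le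
  have h0W : (0 : ℝ) ∈ SW := by
    refine ⟨le_rfl, ?_⟩
    rw [zero_smul]
    apply Set.mem_iInter₂.mpr
    intro v hv
    show ⟪(0 : EuclideanSpace ℝ (Fin n)), v⟫ ≤ g v
    rw [inner_zero_left]
    exact (hgpos v hv).le
  have hSWne : SW.Nonempty := ⟨0, h0W⟩
  have hSWbdd : BddAbove SW := ⟨(1 + ε) * ρK, hupper⟩
  have hρWrfl : radialFn W u = sSup SW := rfl
  set ρW : ℝ := sSup SW with hρWdef
  have hρWub : ρW ≤ (1 + ε) * ρK := csSup_le hSWne hupper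
  have hlowmem : (1 - ε) * ρK ∈ SW := by
    refine ⟨by nlinarith, ?_⟩
    rw [mul_smul]
    apply Set.mem_iInter₂.mpr
    intro v hv
    show ⟪(1 - ε) • (ρK • u), v⟫ ≤ g v
    rw [real_inner_smul_left]
    have h3 := hρKinner v hv
    have h4 := (key v hv).1
    have h5 : (1 - ε) * ⟪ρK • u, v⟫ ≤ (1 - ε) * supportFn K v :=
      mul_le_mul_of_nonneg_left h3 (by linarith)
    linarith
  have hρWlb : (1 - ε) * ρK ≤ ρW := le_csSup hSWbdd hlowmem
  have hdist : |ρW - ρK| ≤ ε * ρK := by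
    have h1 : (1 + ε) * ρK = ρK + ε * ρK := by ring
    have h2 : (1 - ε) * ρK = ρK - ε * ρK := by ring
    rw [h1] at hρWub
    rw [h2] at hρWlb
    exact abs_le.mpr ⟨by linarith, by linarith⟩
  have hhalf : (1 / 2) * ρK ≤ (1 - ε) * ρK :=
    mul_le_mul_of_nonneg_right (by linarith) hρK0
  have h32 : (1 + ε) * ρK ≤ (3 / 2) * ρK :=
    mul_le_mul_of_nonneg_right (by linarith) hρK0
  have hρWlb2 : r0 / 2 ≤ ρW := by
    have := hρWlb
    have h2 : (1 - ε) * ρK = ρK - ε * ρK := by ring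
    linarith [mul_le_mul_of_nonneg_right (show (1:ℝ)/2 ≤ 1 - ε by linarith) hρK0]
  have hρWub2 : ρW ≤ 2 * R0 := by linarith
  -- the integral bound
  have hbound : ∀ x ∈ Set.uIoc ρK ρW, ‖Real.exp (-x ^ 2 / 2) * x ^ (q - 1)‖ ≤ Mi := by
    intro x hx
    have hx1 : r0 / 2 < x := lt_of_le_of_lt (le_min (by linarith) hρWlb2) hx.1
    have hx2 : x ≤ 2 * R0 := hx.2.trans (max_le (by linarith) hρWub2)
    have hxpos : 0 < x := by linarith
    rw [norm_mul, Real.norm_eq_abs, Real.norm_eq_abs, abs_of_pos (Real.exp_pos _),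
      abs_of_pos (Real.rpow_pos_of_pos hxpos _)]
    have he : Real.exp (-x ^ 2 / 2) ≤ 1 := Real.exp_le_one_iff.mpr (by
      have := sq_nonneg x
      linarith)
    have hr : x ^ (q - 1) ≤ (2 * R0) ^ (q - 1) :=
      Real.rpow_le_rpow hxpos.le hx2 (by linarith)
    calc Real.exp (-x ^ 2 / 2) * x ^ (q - 1) ≤ 1 * ((2 * R0) ^ (q - 1)) :=
          mul_le_mul he hr (Real.rpow_nonneg hxpos.le _) one_pos.le
    _ = Mi := by rw [hMidef, one_mul]
  have hint := intervalIntegral.norm_integral_le_of_norm_le_const hbound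
  rw [Real.norm_eq_abs] at hint
  calc |∫ r in ρK..ρW, Real.exp (-r ^ 2 / 2) * r ^ (q - 1)| ≤ Mi * |ρW - ρK| := hint
  _ ≤ Mi * (ε * ρK) := mul_le_mul_of_nonneg_left hdist hMi.le
  _ ≤ Mi * (ε * R0) :=
      mul_le_mul_of_nonneg_left (mul_le_mul_of_nonneg_left hρKub hε0) hMi.le
  _ = C * |t| := by rw [hCdef, hεdef]; ring
end
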